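/- arXiv:2407.14336 — 4 statements merged into one kernel-verified Lean document; each statement's English description precedes it below -/
import Mathlib

section
/- Let T be a tree on N vertices and let T' be obtained from T by a single basic tree transfer. Then T' is again a tree on N vertices and Δ_T ≺ Δ_{T'} (the degree sequence of T is strictly majorized by that of T'). -/
/-!
Moving the edge `{v, w}` to `{u, w}` lowers the degree of `v` by one, raises that of `u` by one
and leaves every other degree unchanged. Since `{v, w}` is a bridge of the tree and `u` lies on
`v`'s side of it, the new edge reconnects the two components of `T - vw`, so `T'` is a tree.

For the degree sequences we use that the sum of the `k` largest entries of a list is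
`min_s (k * s + ∑ (x - s)⁺)`, where `(x - s)⁺` is the truncated subtraction of `ℕ`: every list
is bounded by each term, and a decreasing list attains the minimum at its `k`-th entry. Hence
`L ≼ M` as soon as `∑ (x - s)⁺` over `L` is at most that over `M` for every threshold `s`.
Moving a unit from `deg v` to `deg u ≥ deg v` can only increase these convex sums, strictly for
`s = deg u`, which also separates the two sequences.
-/

/-- Degree of a vertex `v` in a simple graph `G` on a finite vertex set. -/
noncomputable def deg {V : Type*} [Fintype V] (G : SimpleGraph V) (v : V) : ℕ :=
  letI := Classical.decEq V
  letI := Classical.decRel G.Adj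
  G.degree v

/-- The degree sequence of a graph on `Fin N`, arranged in decreasing order. -/
noncomputable def degSeq {N : ℕ} (G : SimpleGraph (Fin N)) : List ℕ :=
  ((Finset.univ.val.map (deg G)).sort (· ≤ ·)).reverse

/-- Generalized (prefix-sum) majorization: `X ≼ Y`. -/
def Maj (X Y : List ℕ) : Prop := ∀ j : ℕ, (X.take j).sum ≤ (Y.take j).sum

/-- A basic tree transfer: choose an edge `{v,w}` with `deg v ≥ 2` and a vertex `u ≠ v` with
`deg u ≥ deg v` lying in the same connected component as `v` after deleting the edge `{v,w}`;
delete the edge `{v,w}` and add the edge `{u,w}`. -/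
def BasicTreeTransfer {V : Type*} [Fintype V] (T T' : SimpleGraph V) : Prop :=
  ∃ v w u : V, T.Adj v w ∧ 2 ≤ deg T v ∧ u ≠ v ∧ deg T v ≤ deg T u ∧
    (T.deleteEdges {s(v, w)}).Reachable u v ∧
    T' = (T.deleteEdges {s(v, w)}) ⊔ SimpleGraph.fromEdgeSet {s(u, w)}

/-- The decreasing rearrangement of a list of naturals. -/
noncomputable def sortDesc (l : List ℕ) : List ℕ :=
  (Multiset.sort (↑l : Multiset ℕ) (· ≤ ·)).reverse

/-- A path (chain) graph: a tree in which every vertex has degree at most 2. -/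
def IsPathGraph {V : Type*} [Fintype V] (G : SimpleGraph V) : Prop :=
  G.IsTree ∧ ∀ v, deg G v ≤ 2

/-- The degree sequence of the chain on `N ≥ 2` vertices: `(2,…,2,1,1)`. -/
def chainSeq (N : ℕ) : List ℕ := List.replicate (N - 2) 2 ++ List.replicate 2 1

/-- A basic transfer on a decreasing list: add 1 to entry `i`, subtract 1 from entry `j ≥ 1`,
and rearrange in decreasing order. -/
def BasicTransfer (X Y : List ℕ) : Prop :=
  ∃ i j : ℕ, i < X.length ∧ j < X.length ∧ i ≠ j ∧ 1 ≤ X.getD j 0 ∧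
    Y = sortDesc ((X.set i (X.getD i 0 + 1)).set j (X.getD j 0 - 1))

namespace List

theorem sum_take_le_mul_add_sum_map_tsub (L : List ℕ) (k s : ℕ) :
    (L.take k).sum ≤ k * s + (L.map (· - s)).sum := by
  induction L generalizing k with
  | nil => simp
  | cons x L ih =>
    cases k with
    | zero => simp
    | succ k =>
      simp only [take_succ_cons, sum_cons, map_cons]
      have := ih k
      rw [Nat.succ_mul]
      omega

theorem Pairwise.exists_mul_add_sum_map_tsub_le {L : List ℕ} (hL : L.Pairwise (· ≥ ·))
    (k : ℕ) {B : ℕ} (hB : ∀ x ∈ L, x ≤ B) :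
    ∃ s ≤ B, k * s + (L.map (· - s)).sum ≤ (L.take k).sum := by
  induction L generalizing k B with
  | nil => exact ⟨0, Nat.zero_le _, by simp⟩
  | cons x L ih =>
    rw [pairwise_cons] at hL
    cases k with
    | zero =>
      refine ⟨x, hB x mem_cons_self, ?_⟩
      have : ∀ y ∈ L, y - x = 0 := fun y hy => Nat.sub_eq_zero_of_le (hL.1 y hy)
      simp [map_congr_left this]
    | succ k =>
      obtain ⟨s, hsx, hs⟩ := ih hL.2 k hL.1
      refine ⟨s, hsx.trans (hB x mem_cons_self), ?_⟩
      simp only [take_succ_cons, sum_cons, map_cons]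
      rw [Nat.succ_mul]
      omega

theorem sum_take_le_sum_take_of_sum_map_tsub_le {L M : List ℕ} (hM : M.Pairwise (· ≥ ·))
    (h : ∀ s, (L.map (· - s)).sum ≤ (M.map (· - s)).sum) (k : ℕ) :
    (L.take k).sum ≤ (M.take k).sum := by
  obtain ⟨s, -, hs⟩ :=
    hM.exists_mul_add_sum_map_tsub_le k (B := M.sum) fun x hx => le_sum_of_mem hx
  calc (L.take k).sum ≤ k * s + (L.map (· - s)).sum := L.sum_take_le_mul_add_sum_map_tsub k s
    _ ≤ k * s + (M.map (· - s)).sum := Nat.add_le_add_left (h s) _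
    _ ≤ (M.take k).sum := hs

end List

namespace SimpleGraph

variable {V : Type*} {G H : SimpleGraph V} {u v w : V}

theorem Connected.of_adj_reachable (hG : G.Connected)
    (h : ∀ ⦃x y⦄, G.Adj x y → H.Reachable x y) : H.Connected := by
  refine (connected_iff H).2 ⟨fun x y => ?_, hG.nonempty⟩
  induction (reachable_iff_reflTransGen x y).1 (hG.preconnected x y) with
  | refl => rfl
  | tail _ hyz ih => exact ih.trans (h hyz)

/-- The edge `vw` is detached from `v` and re-attached at `u`, becoming `uw`. -/
def moveEdge (G : SimpleGraph V) (v w u : V) : SimpleGraph V :=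
  G.deleteEdges {s(v, w)} ⊔ edge u w

theorem IsAcyclic.not_reachable_deleteEdges (hG : G.IsAcyclic) (hvw : G.Adj v w)
    (hreach : (G.deleteEdges {s(v, w)}).Reachable u v) :
    ¬ (G.deleteEdges {s(v, w)}).Reachable u w :=
  fun huw => isAcyclic_iff_forall_adj_isBridge.1 hG hvw (hreach.symm.trans huw)

theorem not_adj_of_not_reachable_deleteEdges (huv : u ≠ v)
    (h : ¬ (G.deleteEdges {s(v, w)}).Reachable u w) : ¬ G.Adj u w := fun huw =>
  h <| Adj.reachable <| (deleteEdges_adj ..).2 ⟨huw, mt Sym2.congr_left.1 huv⟩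

theorem IsTree.moveEdge (hG : G.IsTree) (hvw : G.Adj v w)
    (hreach : (G.deleteEdges {s(v, w)}).Reachable u v) : (G.moveEdge v w u).IsTree := by
  have hcut := SimpleGraph.IsAcyclic.not_reachable_deleteEdges hG.isAcyclic hvw hreach
  have huw : u ≠ w := fun h => hcut (h ▸ Reachable.refl u)
  have hle : G.deleteEdges {s(v, w)} ≤ G.moveEdge v w u := le_sup_left
  have hvw' : (G.moveEdge v w u).Reachable v w :=
    (hreach.symm.mono hle).trans (Adj.reachable (le_sup_right (a := G.deleteEdges _) <|
      (edge_adj ..).2 ⟨Or.inl ⟨rfl, rfl⟩, huw⟩))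
  refine ⟨hG.connected.of_adj_reachable fun x y hxy => ?_, ?_⟩
  · by_cases he : s(x, y) = s(v, w)
    · rcases Sym2.eq_iff.1 he with ⟨rfl, rfl⟩ | ⟨rfl, rfl⟩
      exacts [hvw', hvw'.symm]
    · exact Adj.reachable (hle ((deleteEdges_adj ..).2 ⟨hxy, he⟩))
  · exact (hG.isAcyclic.anti (deleteEdges_le _)).sup_edge_of_not_reachable hcut

theorem moveEdge_adj {x y : V} : (G.moveEdge v w u).Adj x y ↔
    G.Adj x y ∧ s(x, y) ≠ s(v, w) ∨ (x = u ∧ y = w ∨ x = w ∧ y = u) ∧ x ≠ y := by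
  simp [moveEdge, edge_adj]

section Degree

variable [Fintype V]

theorem deg_eq_ncard (G : SimpleGraph V) (x : V) : deg G x = (G.neighborSet x).ncard := by
  classical
  rw [deg, ← card_neighborSet_eq_degree, ← Nat.card_coe_set_eq, Nat.card_eq_fintype_card]

theorem deg_moveEdge_newEnd (huv : u ≠ v) (huw : u ≠ w) (hnadj : ¬ G.Adj u w) :
    deg (G.moveEdge v w u) u = deg G u + 1 := by
  have : (G.moveEdge v w u).neighborSet u = insert w (G.neighborSet u) := by
    ext y; simp [moveEdge_adj, huv, huw]; aesop
  rw [deg_eq_ncard, deg_eq_ncard, this,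
    Set.ncard_insert_of_notMem (s := G.neighborSet u) hnadj]

theorem deg_moveEdge_oldEnd (hvw : G.Adj v w) (huv : u ≠ v) :
    deg (G.moveEdge v w u) v = deg G v - 1 := by
  have : (G.moveEdge v w u).neighborSet v = G.neighborSet v \ {w} := by
    ext y; simp [moveEdge_adj, huv.symm, hvw.ne]
  rw [deg_eq_ncard, deg_eq_ncard, this,
    Set.ncard_sdiff_singleton_of_mem (s := G.neighborSet v) hvw]

theorem deg_moveEdge_of_ne (hvw : G.Adj v w) (hnadj : ¬ G.Adj u w) {x : V} (hxu : x ≠ u)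
    (hxv : x ≠ v) : deg (G.moveEdge v w u) x = deg G x := by
  rcases eq_or_ne w x with rfl | hxw
  · have : (G.moveEdge v w u).neighborSet w = insert u (G.neighborSet w \ {v}) := by
      ext y; simp [moveEdge_adj]; aesop
    rw [deg_eq_ncard, deg_eq_ncard, this,
      Set.ncard_insert_of_notMem (s := G.neighborSet w \ {v})
        fun h => hnadj (h.1 : G.Adj w u).symm,
      Set.ncard_sdiff_singleton_add_one (s := G.neighborSet w) hvw.symm]
  · have : (G.moveEdge v w u).neighborSet x = G.neighborSet x := by
      ext y; simp [moveEdge_adj, hxu, hxv, hxw.symm]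
    rw [deg_eq_ncard, deg_eq_ncard, this]

end Degree

end SimpleGraph

open Finset in
theorem sum_tsub_add_ite_le_of_transfer {ι : Type*} [Fintype ι] {d d' : ι → ℕ} {a b : ι}
    (hab : a ≠ b) (hba : d b ≤ d a) (ha : d' a = d a + 1) (hb : d' b = d b - 1)
    (hrest : ∀ x, x ≠ a → x ≠ b → d' x = d x) (s : ℕ) :
    ∑ x, (d x - s) + (if s = d a then 1 else 0) ≤ ∑ x, (d' x - s) := by
  classical
  have hrest' : ∑ x ∈ {a, b}ᶜ, (d x - s) = ∑ x ∈ {a, b}ᶜ, (d' x - s) :=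
    sum_congr rfl fun x hx => by
      simp only [mem_compl, mem_insert, mem_singleton, not_or] at hx
      rw [hrest x hx.1 hx.2]
  rw [← sum_add_sum_compl {a, b}, ← sum_add_sum_compl {a, b}, sum_pair hab, sum_pair hab,
    hrest', ha, hb]
  split_ifs <;> omega

theorem sum_map_degSeq {N : ℕ} (G : SimpleGraph (Fin N)) (f : ℕ → ℕ) :
    ((degSeq G).map f).sum = ∑ x, f (deg G x) := by
  rw [← Multiset.sum_coe, ← Multiset.map_coe, degSeq, Multiset.coe_reverse, Multiset.sort_eq,
    Multiset.map_map]
  rfl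

theorem pairwise_degSeq {N : ℕ} (G : SimpleGraph (Fin N)) : (degSeq G).Pairwise (· ≥ ·) := by
  rw [degSeq, List.pairwise_reverse]
  exact Multiset.pairwise_sort _ (· ≤ ·)

theorem maj_degSeq_and_ne_of_transfer {N : ℕ} {G G' : SimpleGraph (Fin N)} {a b : Fin N}
    (hab : a ≠ b) (hba : deg G b ≤ deg G a) (ha : deg G' a = deg G a + 1)
    (hb : deg G' b = deg G b - 1) (hrest : ∀ x, x ≠ a → x ≠ b → deg G' x = deg G x) :
    Maj (degSeq G) (degSeq G') ∧ degSeq G ≠ degSeq G' := by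
  have key := sum_tsub_add_ite_le_of_transfer hab hba ha hb hrest
  refine ⟨List.sum_take_le_sum_take_of_sum_map_tsub_le (pairwise_degSeq G') fun s => ?_,
    fun h => ?_⟩
  · rw [sum_map_degSeq, sum_map_degSeq]
    exact le_of_add_le_left (key s)
  · have := key (deg G a)
    rw [if_pos rfl, ← sum_map_degSeq G (· - deg G a), ← sum_map_degSeq G' (· - deg G a), h]
      at this
    omega

/-- a single basic tree transfer applied to a tree yields again a tree, whose
degree sequence strictly majorizes that of the original tree. -/
theorem stmt_2 {N : ℕ} (T T' : SimpleGraph (Fin N)) (hT : T.IsTree)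
    (h : BasicTreeTransfer T T') :
    T'.IsTree ∧ Maj (degSeq T) (degSeq T') ∧ degSeq T ≠ degSeq T' := by
  obtain ⟨v, w, u, hvw, -, huv, hvu, hreach, rfl⟩ := h
  have hcut := SimpleGraph.IsAcyclic.not_reachable_deleteEdges hT.isAcyclic hvw hreach
  have hnadj := SimpleGraph.not_adj_of_not_reachable_deleteEdges huv hcut
  refine ⟨hT.moveEdge hvw hreach, maj_degSeq_and_ne_of_transfer huv hvu ?_ ?_ ?_⟩
  · exact SimpleGraph.deg_moveEdge_newEnd huv (fun h => hcut (h ▸ .refl u)) hnadj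
  · exact SimpleGraph.deg_moveEdge_oldEnd hvw huv
  · exact fun x hxu hxv => SimpleGraph.deg_moveEdge_of_ne hvw hnadj hxu hxv
end

section
/- Let T be a tree on a vertex set V and let u, v ∈ V be distinct vertices with deg_T(v) ≥ 2. Then there exists a tree T' on V such that deg_{T'}(u) = deg_T(u) + 1, deg_{T'}(v) = deg_T(v) − 1, and deg_{T'}(w) = deg_T(w) for all w ∈ V \ {u, v}. -/
namespace SimpleGraph

variable {V : Type*}

lemma Connected.of_deleteEdges_le {G G' : SimpleGraph V} {v w : V} (hG : G.Connected)
    (hle : G.deleteEdges {s(v, w)} ≤ G') (hvw : G'.Reachable v w) : G'.Connected := by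
  have hstep : ∀ a b, G.Adj a b → G'.Reachable a b := by
    intro a b hab
    by_cases he : s(a, b) = s(v, w)
    · rcases Sym2.eq_iff.mp he with ⟨rfl, rfl⟩ | ⟨rfl, rfl⟩
      exacts [hvw, hvw.symm]
    · exact (hle (deleteEdges_adj.mpr ⟨hab, he⟩)).reachable
  refine (connected_iff _).mpr ⟨fun a b => ?_, hG.nonempty⟩
  rw [reachable_iff_reflTransGen]
  exact (reachable_iff_reflTransGen a b).mp (hG.preconnected a b) |>.lift' id fun a b hab =>
    (reachable_iff_reflTransGen a b).mp (hstep a b hab)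

lemma IsTree.not_reachable_deleteEdges {T : SimpleGraph V} {v w : V} (hT : T.IsTree)
    (hvw : T.Adj v w) : ¬(T.deleteEdges {s(v, w)}).Reachable v w :=
  isAcyclic_iff_forall_adj_isBridge.mp hT.isAcyclic hvw

theorem IsTree.deleteEdges_sup_edge {T : SimpleGraph V} {u v w : V} (hT : T.IsTree)
    (hvw : T.Adj v w) (hu : (T.deleteEdges {s(v, w)}).Reachable v u) :
    (T.deleteEdges {s(v, w)} ⊔ edge u w).IsTree := by
  have hbridge := hT.not_reachable_deleteEdges hvw
  have huw : u ≠ w := by rintro rfl; exact hbridge hu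
  refine ⟨hT.connected.of_deleteEdges_le le_sup_left ?_, ?_⟩
  · exact (hu.mono le_sup_left).trans (Adj.reachable (Or.inr (by simp [edge_adj, huw])))
  · exact (hT.isAcyclic.anti (deleteEdges_le _)).sup_edge_of_not_reachable
      fun h => hbridge (hu.trans h)

lemma deg_eq_ncard_neighborSet [Fintype V] (G : SimpleGraph V) (x : V) :
    deg G x = (G.neighborSet x).ncard := by
  classical
  rw [deg, degree, ← Set.ncard_coe_finset, coe_neighborFinset]

section Degrees

variable [Fintype V] {G : SimpleGraph V} {u v w x : V}

lemma deg_sup_edge_left (huw : u ≠ w) (hn : ¬G.Adj u w) :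
    deg (G ⊔ edge u w) u = deg G u + 1 := by
  have : (G ⊔ edge u w).neighborSet u = insert w (G.neighborSet u) := by
    ext y; rcases eq_or_ne y w with rfl | hy <;> simp [edge_adj, *]
  rw [deg_eq_ncard_neighborSet, deg_eq_ncard_neighborSet, this,
    Set.ncard_insert_of_notMem ((G.mem_neighborSet u w).not.mpr hn)]

lemma deg_sup_edge_of_ne (hu : x ≠ u) (hw : x ≠ w) : deg (G ⊔ edge u w) x = deg G x := by
  have : (G ⊔ edge u w).neighborSet x = G.neighborSet x := by
    ext y; simp [edge_adj, hu, hw]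
  rw [deg_eq_ncard_neighborSet, deg_eq_ncard_neighborSet, this]

lemma deg_deleteEdges_left_add_one (hvw : G.Adj v w) :
    deg (G.deleteEdges {s(v, w)}) v + 1 = deg G v := by
  have : (G.deleteEdges {s(v, w)}).neighborSet v = G.neighborSet v \ {w} := by
    ext y
    simp only [mem_neighborSet, deleteEdges_adj, Set.mem_sdiff, Set.mem_singleton_iff]
    grind
  rw [deg_eq_ncard_neighborSet, deg_eq_ncard_neighborSet, this,
    Set.ncard_sdiff_singleton_add_one ((G.mem_neighborSet v w).mpr hvw)]

lemma deg_deleteEdges_of_ne (hv : x ≠ v) (hw : x ≠ w) :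
    deg (G.deleteEdges {s(v, w)}) x = deg G x := by
  have : (G.deleteEdges {s(v, w)}).neighborSet x = G.neighborSet x := by
    ext y; simp [hv, hw]
  rw [deg_eq_ncard_neighborSet, deg_eq_ncard_neighborSet, this]

end Degrees

lemma exists_adj_ne_of_two_le_deg [Fintype V] {G : SimpleGraph V} {v : V} (hv : 2 ≤ deg G v)
    (x : V) : ∃ w, G.Adj v w ∧ w ≠ x :=
  Set.exists_ne_of_one_lt_ncard (s := G.neighborSet v)
    (by rw [← deg_eq_ncard_neighborSet]; omega) x

lemma IsTree.exists_adj_reachable_deleteEdges [Fintype V] {T : SimpleGraph V} (hT : T.IsTree)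
    {u v : V} (huv : u ≠ v) (hv : 2 ≤ deg T v) :
    ∃ w, T.Adj v w ∧ (T.deleteEdges {s(v, w)}).Reachable v u := by
  obtain ⟨p, hp⟩ := hT.connected.exists_isPath v u
  cases p with
  | nil => exact absurd rfl huv
  | @cons _ x _ hvx q =>
    obtain ⟨w, hvw, hwx⟩ := exists_adj_ne_of_two_le_deg hv x
    refine ⟨w, hvw, reachable_deleteEdges_iff_exists_walk.mpr ⟨.cons hvx q, ?_⟩⟩
    rw [Walk.cons_isPath_iff] at hp
    rw [Walk.edges_cons, List.mem_cons, not_or]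
    refine ⟨fun h => ?_, fun h => hp.2 (q.fst_mem_support_of_mem_edges h)⟩
    rcases Sym2.eq_iff.mp h with ⟨-, h⟩ | ⟨h, -⟩
    exacts [hwx h, hvx.ne h]

end SimpleGraph

open SimpleGraph in
/-- given a tree `T` on `V` and distinct vertices `u, v` with `deg v ≥ 2`,
there is a tree `T'` on `V` raising the degree of `u` by one, lowering that of `v` by one,
and keeping all other degrees. -/
theorem stmt_3 {V : Type*} [Fintype V] (T : SimpleGraph V) (hT : T.IsTree)
    (u v : V) (huv : u ≠ v) (hv : 2 ≤ deg T v) :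
    ∃ T' : SimpleGraph V, T'.IsTree ∧ deg T' u = deg T u + 1 ∧
      deg T' v = deg T v - 1 ∧ ∀ w, w ≠ u → w ≠ v → deg T' w = deg T w := by
  obtain ⟨w, hvw, hu⟩ := hT.exists_adj_reachable_deleteEdges huv hv
  have huw : ¬(T.deleteEdges {s(v, w)}).Reachable u w :=
    fun h => hT.not_reachable_deleteEdges hvw (hu.trans h)
  have hwu : w ≠ u := by rintro rfl; exact huw .rfl
  have hdeg_w : deg (T.deleteEdges {s(v, w)}) w + 1 = deg T w := by
    rw [Sym2.eq_swap]; exact deg_deleteEdges_left_add_one hvw.symm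
  refine ⟨_, hT.deleteEdges_sup_edge hvw hu, ?_, ?_, fun x hxu hxv => ?_⟩
  · rw [deg_sup_edge_left hwu.symm fun h => huw h.reachable,
      deg_deleteEdges_of_ne huv hwu.symm]
  · rw [deg_sup_edge_of_ne huv.symm hvw.ne, ← deg_deleteEdges_left_add_one hvw,
      Nat.add_sub_cancel]
  · rcases eq_or_ne x w with rfl | hxw
    · rw [edge_comm, deg_sup_edge_left hwu fun h => huw h.symm.reachable, hdeg_w]
    · rw [deg_sup_edge_of_ne hxu hxw, deg_deleteEdges_of_ne hxv hxw]
end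

section
/- Let N ≥ 2, let Δ_C be the degree sequence of the path (chain) on N vertices (namely (2, 2, …, 2, 1, 1) for N ≥ 3 and (1,1) for N = 2), and let M be a connected simple graph on N vertices that is not a path. Then Δ_C ≺ Δ_M, i.e., the degree sequence of the chain is strictly majorized by the degree sequence of M. -/
/-
A connected graph on `N` vertices has at least `N - 1` edges, so its degree sum is at least
`2N - 2`, that of the chain. As the chain's entries lie in `{1, 2}`, a prefix of a decreasing
sequence can fall behind the chain's prefix of the same length only if it contains an entry
`≤ 1`; then the whole tail after it is `≤ 1` entrywise, hence bounded by the chain's tail, and the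
total sums decide. Equal sequences force the degree sum `2N - 2`, i.e. `N - 1` edges, so the
connected graph is a tree, and its degrees are at most `2`: it is a path.
-/

open SimpleGraph

section Majorization

variable {X Y : List ℕ} {b : ℕ}

theorem maj_of_pairwise_ge_of_sum_le (hlen : X.length = Y.length)
    (hX : ∀ x ∈ X, b ≤ x ∧ x ≤ b + 1) (hYsort : Y.Pairwise (· ≥ ·))
    (hsum : X.sum ≤ Y.sum) : Maj X Y := by
  intro j
  have hsplitX := congrArg List.sum (X.take_append_drop j)
  have hsplitY := congrArg List.sum (Y.take_append_drop j)
  rw [List.sum_append] at hsplitX hsplitY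
  have hXtake : (X.take j).sum ≤ (X.take j).length * (b + 1) := by
    simpa using List.sum_le_card_nsmul _ _ fun x hx => (hX x (List.mem_of_mem_take hx)).2
  have hXdrop : (X.drop j).length * b ≤ (X.drop j).sum := by
    simpa using List.card_nsmul_le_sum _ _ fun x hx => (hX x (List.mem_of_mem_drop hx)).1
  have hlen_take : (X.take j).length = (Y.take j).length := by simp [hlen]
  have hlen_drop : (X.drop j).length = (Y.drop j).length := by simp [hlen]
  by_cases hbig : ∀ y ∈ Y.take j, b + 1 ≤ y
  · have := List.card_nsmul_le_sum _ _ hbig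
    simp only [smul_eq_mul] at this
    rw [hlen_take] at hXtake
    omega
  · push Not at hbig
    obtain ⟨y, hy, hyb⟩ := hbig
    have hYdrop : (Y.drop j).sum ≤ (Y.drop j).length * b := by
      simpa using List.sum_le_card_nsmul _ _ fun z hz =>
        (hYsort.rel_of_mem_take_of_mem_drop hy hz).trans (Nat.le_of_lt_succ hyb)
    rw [hlen_drop] at hXdrop
    omega

end Majorization

namespace SimpleGraph

variable {V : Type*} [Fintype V] {G : SimpleGraph V}

theorem deg_eq_degree (v : V) [Fintype (G.neighborSet v)] : deg G v = G.degree v := by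
  unfold deg
  congr 1
  exact Subsingleton.elim _ _

theorem sum_deg_eq_two_mul_card_edgeSet (G : SimpleGraph V) :
    ∑ v, deg G v = 2 * Nat.card G.edgeSet := by
  classical
  simp only [deg_eq_degree, sum_degrees_eq_twice_card_edges, Nat.card_eq_fintype_card,
    edgeFinset_card]

theorem Connected.two_mul_le_sum_deg (hG : G.Connected) :
    2 * (Fintype.card V - 1) ≤ ∑ v, deg G v := by
  have := hG.card_vert_le_card_edgeSet_add_one
  rw [Nat.card_eq_fintype_card (α := V)] at this
  rw [sum_deg_eq_two_mul_card_edgeSet]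
  omega

theorem Connected.isTree_of_sum_deg_le (hG : G.Connected)
    (hsum : ∑ v, deg G v ≤ 2 * (Fintype.card V - 1)) : G.IsTree := by
  have hle := hG.card_vert_le_card_edgeSet_add_one
  have := hG.nonempty
  rw [Nat.card_eq_fintype_card (α := V)] at hle
  rw [sum_deg_eq_two_mul_card_edgeSet] at hsum
  refine isTree_iff_connected_and_card.2 ⟨hG, ?_⟩
  rw [Nat.card_eq_fintype_card (α := V)]
  have := Fintype.card_pos (α := V)
  omega

end SimpleGraph

section DegreeSequences

variable {N : ℕ}

theorem degSeq_length (G : SimpleGraph (Fin N)) : (degSeq G).length = N := by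
  simp [degSeq]

theorem sum_degSeq (G : SimpleGraph (Fin N)) : (degSeq G).sum = ∑ v, deg G v := by
  rw [degSeq, List.sum_reverse, ← Multiset.sum_coe, Multiset.sort_eq]
  rfl

theorem mem_degSeq {G : SimpleGraph (Fin N)} {d : ℕ} : d ∈ degSeq G ↔ ∃ v, deg G v = d := by
  simp [degSeq]

theorem degSeq_pairwise_ge (G : SimpleGraph (Fin N)) : (degSeq G).Pairwise (· ≥ ·) := by
  rw [degSeq, List.pairwise_reverse]
  exact Multiset.pairwise_sort _ _

theorem chainSeq_length (hN : 2 ≤ N) : (chainSeq N).length = N := by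
  simp [chainSeq]
  omega

theorem sum_chainSeq (hN : 2 ≤ N) : (chainSeq N).sum = 2 * (N - 1) := by
  simp [chainSeq]
  omega

theorem mem_chainSeq {d : ℕ} (hd : d ∈ chainSeq N) : 1 ≤ d ∧ d ≤ 2 := by
  rcases List.mem_append.1 hd with h | h <;> simp [List.eq_of_mem_replicate h]

end DegreeSequences

/-- the degree sequence of the chain on `N` vertices is strictly majorized by the
degree sequence of any connected `N`-vertex graph that is not a path. -/
theorem stmt_6 {N : ℕ} (hN : 2 ≤ N) (M : SimpleGraph (Fin N)) (hM : M.Connected)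
    (hnp : ¬ IsPathGraph M) :
    Maj (chainSeq N) (degSeq M) ∧ chainSeq N ≠ degSeq M := by
  have hsum : 2 * (N - 1) ≤ ∑ v, deg M v := by simpa using hM.two_mul_le_sum_deg
  refine ⟨maj_of_pairwise_ge_of_sum_le ?_ (fun _ => mem_chainSeq) (degSeq_pairwise_ge M) ?_, ?_⟩
  · rw [chainSeq_length hN, degSeq_length]
  · rwa [sum_chainSeq hN, sum_degSeq]
  · intro heq
    refine hnp ⟨hM.isTree_of_sum_deg_le ?_, fun v => ?_⟩
    · rw [Fintype.card_fin, ← sum_degSeq, ← heq, sum_chainSeq hN]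
    · exact (mem_chainSeq (heq ▸ mem_degSeq.2 ⟨v, rfl⟩)).2
end

section
/- Let X = (x_1, …, x_N) and Y = (y_1, …, y_N) be decreasing sequences of natural numbers with ∑_{k=1}^N x_k = ∑_{k=1}^N y_k and X ≼ Y. Then Y can be obtained from X by a finite number of basic transfers: there is a finite sequence of decreasing natural-number sequences X = Z_0, Z_1, …, Z_m = Y such that each Z_{t+1} is the decreasing rearrangement of the sequence obtained from Z_t by adding 1 to one entry and subtracting 1 from another (positive) entry. -/
/-!
Write `S_k(X) = x_0 + ⋯ + x_{k-1}`. Let `i` be the first index with `S_{i+1}(X) < S_{i+1}(Y)`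
and `j + 1` the first index after it with `S_{j+1}(X) = S_{j+1}(Y)`. Moving one unit from `x_j`
to `x_i` raises exactly `S_{i+1}, …, S_j`, all of which lie strictly below the corresponding
`S_k(Y)`, so majorization is preserved. The result is still decreasing:
`x_i < y_i ≤ y_{i-1} = x_{i-1}`, and `x_{j+1} < x_j`, for otherwise `x_{j+1} = x_j > y_j ≥ y_{j+1}` would push `S_{j+2}(X)` above
`S_{j+2}(Y)`. The total gap `∑_k (S_k(Y) - S_k(X))` drops by `j - i`, so finitely many transfers
reach `Y`.
-/

open Finset Function

def prefixSum (x : ℕ → ℕ) (k : ℕ) : ℕ := ∑ m ∈ range k, x m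

@[simp] lemma prefixSum_zero (x : ℕ → ℕ) : prefixSum x 0 = 0 := rfl

lemma prefixSum_succ (x : ℕ → ℕ) (k : ℕ) : prefixSum x (k + 1) = prefixSum x k + x k :=
  sum_range_succ x k

lemma eq_of_prefixSum_eq {x y : ℕ → ℕ} (h : ∀ k, prefixSum x k = prefixSum y k) : x = y := by
  funext k
  have := h (k + 1)
  rw [prefixSum_succ, prefixSum_succ, h k] at this
  omega

def transfer (x : ℕ → ℕ) (i j : ℕ) : ℕ → ℕ := update (update x i (x i + 1)) j (x j - 1)

lemma prefixSum_transfer {x : ℕ → ℕ} {i j : ℕ} (hij : i < j) (hj : 0 < x j) (k : ℕ) :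
    prefixSum (transfer x i j) k = prefixSum x k + if i < k ∧ k ≤ j then 1 else 0 := by
  induction k with
  | zero => simp
  | succ k ih =>
    rw [prefixSum_succ, prefixSum_succ, ih]
    simp only [transfer, update_apply]
    split_ifs <;> subst_vars <;> omega

lemma antitone_transfer {x : ℕ → ℕ} {i j : ℕ} (hx : Antitone x) (hij : i < j)
    (hi : ∀ k, k + 1 = i → x i < x k) (hj : x (j + 1) < x j) : Antitone (transfer x i j) := by
  refine antitone_nat_of_succ_le fun k => ?_
  have hk : x (k + 1) ≤ x k := hx (by omega)
  have hki := hi k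
  simp only [transfer, update_apply]
  split_ifs <;> subst_vars <;> omega

lemma exists_first_prefixSum_lt {x y : ℕ → ℕ} (hmaj : ∀ k, prefixSum x k ≤ prefixSum y k)
    (hne : x ≠ y) :
    ∃ i, prefixSum x (i + 1) < prefixSum y (i + 1) ∧ ∀ k ≤ i, prefixSum x k = prefixSum y k := by
  have hgap : ∃ i, prefixSum x (i + 1) < prefixSum y (i + 1) := by
    by_contra! h
    refine hne (eq_of_prefixSum_eq fun k => ?_)
    cases k with
    | zero => rfl
    | succ k => exact (hmaj _).antisymm (h k)
  classical
  refine ⟨Nat.find hgap, Nat.find_spec hgap, ?_⟩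
  rintro (_ | k) hk
  · rfl
  · exact (hmaj _).antisymm (not_lt.1 (Nat.find_min hgap (by omega)))

lemma exists_transfer_indices {x y : ℕ → ℕ} {n : ℕ} (hy : Antitone y)
    (hmaj : ∀ k, prefixSum x k ≤ prefixSum y k)
    (htot : ∀ k, n ≤ k → prefixSum x k = prefixSum y k) (hne : x ≠ y) :
    ∃ i j, i < j ∧ j < n ∧ (∀ k, i < k → k ≤ j → prefixSum x k < prefixSum y k) ∧
      (∀ k, k + 1 = i → x i < x k) ∧ x (j + 1) < x j := by
  obtain ⟨i, hi_lt, hi_eq⟩ := exists_first_prefixSum_lt hmaj hne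
  have hclose : ∃ j, i < j ∧ prefixSum x (j + 1) = prefixSum y (j + 1) :=
    ⟨max n (i + 1), by omega, htot _ (by omega)⟩
  obtain ⟨j, ⟨hij, hj_eq⟩, hj_min⟩ : ∃ j, (i < j ∧ prefixSum x (j + 1) = prefixSum y (j + 1)) ∧
      ∀ k < j, ¬(i < k ∧ prefixSum x (k + 1) = prefixSum y (k + 1)) := by
    classical exact ⟨Nat.find hclose, Nat.find_spec hclose, fun k => Nat.find_min hclose⟩
  have hgap_lt : ∀ k, i < k → k ≤ j → prefixSum x k < prefixSum y k := by
    rintro (_ | k) hik hkj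
    · omega
    · rcases (Nat.lt_succ_iff.1 hik).eq_or_lt with rfl | hik
      · exact hi_lt
      · exact (hmaj _).lt_of_ne fun h => hj_min k (by omega) ⟨hik, h⟩
  have hjx : y j < x j := by
    have := hgap_lt j hij le_rfl
    rw [prefixSum_succ, prefixSum_succ] at hj_eq
    omega
  refine ⟨i, j, hij, ?_, hgap_lt, ?_, ?_⟩
  · by_contra! hjn
    exact (hgap_lt j hij le_rfl).ne (htot j hjn)
  · rintro k rfl
    have h1 := hi_eq k (by omega)
    have h2 := hi_eq (k + 1) le_rfl
    rw [prefixSum_succ x (k + 1), prefixSum_succ y (k + 1), h2] at hi_lt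
    rw [prefixSum_succ, prefixSum_succ, h1] at h2
    have : y (k + 1) ≤ y k := hy (by omega)
    omega
  · by_contra! hle
    have h := hmaj (j + 2)
    rw [prefixSum_succ x (j + 1), prefixSum_succ y (j + 1), hj_eq] at h
    have : y (j + 1) ≤ y j := hy (by omega)
    omega

lemma prefixSum_transfer_le {x y : ℕ → ℕ} {i j : ℕ} (hij : i < j) (hj : 0 < x j)
    (hmaj : ∀ k, prefixSum x k ≤ prefixSum y k)
    (hlt : ∀ k, i < k → k ≤ j → prefixSum x k < prefixSum y k) (k : ℕ) :
    prefixSum (transfer x i j) k ≤ prefixSum y k := by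
  rw [prefixSum_transfer hij hj]
  split_ifs with hk
  · exact hlt k hk.1 hk.2
  · simpa using hmaj k

namespace List

lemma sum_take_eq_prefixSum_getD (l : List ℕ) (k : ℕ) :
    (l.take k).sum = prefixSum (l.getD · 0) k := by
  induction k with
  | zero => simp
  | succ k ih =>
    rw [take_add_one, sum_append, ih, prefixSum_succ, getD_eq_getElem?_getD]
    cases l[k]? <;> simp

lemma prefixSum_getD_of_length_le (l : List ℕ) {k : ℕ} (hk : l.length ≤ k) :
    prefixSum (l.getD · 0) k = l.sum := by
  rw [← sum_take_eq_prefixSum_getD, take_of_length_le hk]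

lemma pairwise_ge_iff_antitone_getD (l : List ℕ) :
    l.Pairwise (· ≥ ·) ↔ Antitone (l.getD · 0) := by
  rw [pairwise_iff_getElem]
  constructor
  · intro h a b hab
    rcases lt_or_ge b l.length with hb | hb
    · rcases hab.eq_or_lt with rfl | hab
      · rfl
      · simpa [hb, hab.trans hb] using h a b (hab.trans hb) hb hab
    · simp [getElem?_eq_none hb]
  · intro h a b ha hb hab
    simpa [ha, hb] using h hab.le

lemma eq_of_getD_eq {l l' : List ℕ} (hlen : l.length = l'.length)
    (h : (l.getD · 0) = (l'.getD · 0)) : l = l' :=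
  ext_getElem hlen fun k hk hk' => by
    simpa [hk, hk'] using congrFun h k

def transfer (l : List ℕ) (i j : ℕ) : List ℕ := (l.set i (l.getD i 0 + 1)).set j (l.getD j 0 - 1)

@[simp] lemma length_transfer (l : List ℕ) (i j : ℕ) : (l.transfer i j).length = l.length := by
  simp [transfer]

lemma getD_transfer (l : List ℕ) {i : ℕ} (hi : i < l.length) (j : ℕ) :
    ((l.transfer i j).getD · 0) = _root_.transfer (l.getD · 0) i j := by
  funext k
  simp only [transfer, _root_.transfer, getD_eq_getElem?_getD, getElem?_set, length_set,
    update_apply]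
  split_ifs <;> subst_vars <;> simp_all

lemma sortDesc_eq_self {l : List ℕ} (h : l.Pairwise (· ≥ ·)) : sortDesc l = l := by
  rw [sortDesc, ← Multiset.coe_reverse, Multiset.coe_sort,
    mergeSort_eq_self _ (pairwise_reverse.2 h), reverse_reverse]

end List

lemma maj_iff_prefixSum_le {X Y : List ℕ} :
    Maj X Y ↔ ∀ k, prefixSum (X.getD · 0) k ≤ prefixSum (Y.getD · 0) k := by
  simp only [Maj, List.sum_take_eq_prefixSum_getD]

def majGap (X Y : List ℕ) : ℕ := ∑ k ∈ range Y.length, ((Y.take k).sum - (X.take k).sum)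

lemma exists_basicTransfer_of_maj {X Y : List ℕ} (hlen : X.length = Y.length)
    (hX : X.Pairwise (· ≥ ·)) (hY : Y.Pairwise (· ≥ ·)) (hsum : X.sum = Y.sum) (hmaj : Maj X Y)
    (hne : X ≠ Y) :
    ∃ X', BasicTransfer X X' ∧ X'.length = Y.length ∧ X'.Pairwise (· ≥ ·) ∧ X'.sum = Y.sum ∧
      Maj X' Y ∧ majGap X' Y < majGap X Y := by
  have htot (k : ℕ) (hk : Y.length ≤ k) :
      prefixSum (X.getD · 0) k = prefixSum (Y.getD · 0) k := by
    rw [X.prefixSum_getD_of_length_le (hlen ▸ hk), Y.prefixSum_getD_of_length_le hk, hsum]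
  obtain ⟨i, j, hij, hjN, hlt, hi, hj⟩ :=
    exists_transfer_indices (Y.pairwise_ge_iff_antitone_getD.1 hY) (maj_iff_prefixSum_le.1 hmaj)
      htot fun h => hne (List.eq_of_getD_eq hlen h)
  have hxj : 0 < X.getD j 0 := by omega
  have hget := X.getD_transfer (i := i) (by omega) j
  have hsorted : (X.transfer i j).Pairwise (· ≥ ·) := by
    rw [List.pairwise_ge_iff_antitone_getD, hget]
    exact antitone_transfer (X.pairwise_ge_iff_antitone_getD.1 hX) hij hi hj
  have hpre (k : ℕ) : ((X.transfer i j).take k).sum =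
      (X.take k).sum + if i < k ∧ k ≤ j then 1 else 0 := by
    rw [List.sum_take_eq_prefixSum_getD, List.sum_take_eq_prefixSum_getD, hget,
      prefixSum_transfer hij hxj]
  refine ⟨X.transfer i j, ⟨i, j, by omega, by omega, hij.ne, hxj,
    (List.sortDesc_eq_self hsorted).symm⟩, by simp [hlen], hsorted, ?_, ?_, ?_⟩
  · have := hpre Y.length
    rwa [List.take_of_length_le (by simp [hlen]), List.take_of_length_le hlen.le,
      if_neg (by omega), add_zero, hsum] at this
  · rw [maj_iff_prefixSum_le, hget]
    exact prefixSum_transfer_le hij hxj (maj_iff_prefixSum_le.1 hmaj) hlt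
  · have hlt_j := hlt j hij le_rfl
    rw [← List.sum_take_eq_prefixSum_getD, ← List.sum_take_eq_prefixSum_getD] at hlt_j
    refine sum_lt_sum (fun k _ => by rw [hpre k]; omega) ⟨j, mem_range.2 hjN, ?_⟩
    rw [hpre j, if_pos ⟨hij, le_rfl⟩]
    omega

theorem reflTransGen_basicTransfer_of_maj {Y : List ℕ} (hY : Y.Pairwise (· ≥ ·)) (X : List ℕ)
    (hlen : X.length = Y.length) (hX : X.Pairwise (· ≥ ·)) (hsum : X.sum = Y.sum)
    (hmaj : Maj X Y) :
    Relation.ReflTransGen (fun A B => BasicTransfer A B ∧ B.Pairwise (· ≥ ·)) X Y := by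
  induction h : majGap X Y using Nat.strong_induction_on generalizing X with
  | _ n ih =>
    by_cases hne : X = Y
    · exact hne ▸ .refl
    · obtain ⟨X', htr, hlen', hX', hsum', hmaj', hgap⟩ :=
        exists_basicTransfer_of_maj hlen hX hY hsum hmaj hne
      exact .head ⟨htr, hX'⟩ (ih _ (h ▸ hgap) X' hlen' hX' hsum' hmaj' rfl)

lemma Relation.ReflTransGen.exists_seq {α : Type*} {r : α → α → Prop} {a b : α}
    (h : Relation.ReflTransGen r a b) :
    ∃ (m : ℕ) (Z : ℕ → α), Z 0 = a ∧ Z m = b ∧ ∀ t < m, r (Z t) (Z (t + 1)) := by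
  induction h using Relation.ReflTransGen.head_induction_on with
  | refl => exact ⟨0, fun _ => b, rfl, rfl, by simp⟩
  | @head a c hac _ ih =>
    obtain ⟨m, Z, h0, hm, hZ⟩ := ih
    refine ⟨m + 1, fun | 0 => a | t + 1 => Z t, rfl, hm, ?_⟩
    rintro (_ | t) ht
    · simpa [h0] using hac
    · exact hZ t (by omega)

/-- Muirhead: if `X ≼ Y` for decreasing natural sequences of equal length and
equal sum, then `Y` is obtained from `X` by finitely many basic transfers. -/
theorem stmt_11 {N : ℕ} (X Y : List ℕ)
    (hXlen : X.length = N) (hYlen : Y.length = N)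
    (hXsort : X.Pairwise (· ≥ ·)) (hYsort : Y.Pairwise (· ≥ ·))
    (hsum : X.sum = Y.sum) (hmaj : Maj X Y) :
    ∃ (m : ℕ) (Z : ℕ → List ℕ), Z 0 = X ∧ Z m = Y ∧
      (∀ t ≤ m, (Z t).Pairwise (· ≥ ·)) ∧
      ∀ t < m, BasicTransfer (Z t) (Z (t + 1)) := by
  obtain ⟨m, Z, h0, hm, hZ⟩ := (reflTransGen_basicTransfer_of_maj hYsort X
    (hXlen.trans hYlen.symm) hXsort hsum hmaj).exists_seq
  refine ⟨m, Z, h0, hm, ?_, fun t ht => (hZ t ht).1⟩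
  rintro (_ | t) ht
  · exact h0 ▸ hXsort
  · exact (hZ t ht).2
end
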